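/- Let ℬ be locally finitely presentable and B an object. Then 𝒢_B is a dense generator of B↓ℬ: every object f : B → C of the coslice is the colimit of the canonical (filtered) diagram 𝒢_B↓f → B↓ℬ. -/

import Mathlib

/-!
The key fact is local: if `l : X ⟶ Y` is a pushout of a map `K ⟶ K'` of finitely presented
objects, then every map from a finitely presented object into `Y` factors through `P ⟶ Y`, where
`l` is the pushout of some `E ⟶ P` along some `E ⟶ X` with `E`, `P` finitely presented. Indeed,
writing `X` as a filtered colimit of finitely presented `Eᵢ` under `K`, the pushout
`Y = X ⊔_K K'` is the filtered colimit of the finitely presented `Eᵢ ⊔_K K'`. Consequently `𝒢_B`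
is closed under composition with pushouts of maps between finitely presented objects, which makes
`𝒢_B ↓ f` filtered: an upper bound of two objects is their pushout over `B`, and two maps
`A ⟶ Y` out of a finitely presented `A` that agree in `C` are coequalized by pushing out the
codiagonal `A ⨿ A ⟶ A`.

For the colimit, write `C` as a filtered colimit of finitely presented `Dⱼ`. A cocone with vertex
`B ⟶ Z` induces `C ⟶ Z` through the objects `B ⟶ B ⨿ Dⱼ` of `𝒢_B`, and this map is compatible
with the whole cocone because two finitely presented maps into `C` through objects of `𝒢_B ↓ f`
are merged by filteredness.
-/

open CategoryTheory Limits Opposite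

universe w v u

section Defs

variable {𝒞 : Type u} [Category.{v} 𝒞]

/-- An object `K` is finitely presented if `Hom(K, -)` preserves filtered colimits. -/
def IsFinPres (K : 𝒞) : Prop :=
  ∀ (J : Type v) (_ : SmallCategory J) (_ : IsFiltered J),
    Nonempty (PreservesColimitsOfShape J (coyoneda.obj (op K)))

/-- A category is locally finitely presentable if it is cocomplete and admits an essentially
small family of finitely presented objects such that every object is a filtered colimit of
objects of this family. -/
class IsLFP (𝒞 : Type u) [Category.{v} 𝒞] extends HasColimits 𝒞 : Prop where
  exists_gen : ∃ S : Set 𝒞, Small.{v} S ∧ (∀ K ∈ S, IsFinPres K) ∧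
    ∀ X : 𝒞, ∃ (J : Type v) (_ : SmallCategory J) (_ : IsFiltered J)
      (D : J ⥤ 𝒞) (c : Cocone D) (_ : Nonempty (IsColimit c)),
      c.pt = X ∧ ∀ j, D.obj j ∈ S

/-- `l : X ⟶ Y` belongs to the coslice generator `𝒢_X`: it is a pushout of a morphism
between finitely presented objects along a map into `X`. -/
def InGen {X Y : 𝒞} (l : X ⟶ Y) : Prop :=
  ∃ (K K' : 𝒞) (_ : IsFinPres K) (_ : IsFinPres K') (k : K ⟶ K') (a : K ⟶ X)
    (c : K' ⟶ Y), IsPushout a k l c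

end Defs

variable {ℬ : Type u} [Category.{v} ℬ] {B : ℬ}

/-- The coslice generator `𝒢_B`, as a full subcategory of `Under B`. -/
abbrev CosliceGen (B : ℬ) := ObjectProperty.FullSubcategory (fun l : Under B => InGen l.hom)

/-- The inclusion `𝒢_B ⥤ B↓ℬ`. -/
abbrev cosliceGenIncl (B : ℬ) : CosliceGen B ⥤ Under B := ObjectProperty.ι _

/-- The canonical cocone on the projection `𝒢_B ↓ f ⥤ B↓ℬ`, with vertex `f`. -/
def canonicalCocone (f : Under B) :
    Cocone (CostructuredArrow.proj (cosliceGenIncl B) f ⋙ cosliceGenIncl B) where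
  pt := f
  ι :=
    { app := fun X => X.hom
      naturality := fun X Y η => by
        exact (CostructuredArrow.w η).trans (Category.comp_id X.hom).symm }

attribute [local simp] pushout.inl_desc pushout.inr_desc coprod.inl_desc coprod.inr_desc

section FinitelyPresented

variable {𝒞 : Type u} [Category.{v} 𝒞]

attribute [local instance] Cardinal.fact_isRegular_aleph0

lemma isFinPres_iff_isFinitelyPresentable (K : 𝒞) :
    IsFinPres K ↔ IsFinitelyPresentable.{v} K := by
  refine ⟨fun h => ⟨fun J _ _ => ?_⟩, fun h J _ _ => ?_⟩
  · exact (h J _ (isFiltered_of_isCardinalFiltered J Cardinal.aleph0)).some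
  · have := (isCardinalFiltered_aleph0_iff J).2 ‹_›
    exact ⟨preservesColimitsOfShape_of_isCardinalPresentable K Cardinal.aleph0 J⟩

lemma IsFinPres.exists_hom_of_isColimit {K : 𝒞} (hK : IsFinPres K) {J : Type v}
    [SmallCategory J] [IsFiltered J] {D : J ⥤ 𝒞} {c : Cocone D} (hc : IsColimit c)
    (x : K ⟶ c.pt) : ∃ (j : J) (y : K ⟶ D.obj j), y ≫ c.ι.app j = x :=
  have := (isFinPres_iff_isFinitelyPresentable K).1 hK
  IsFinitelyPresentable.exists_hom_of_isColimit hc x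

lemma IsFinPres.of_isColimit {J : Type} [SmallCategory J] [FinCategory J] {D : J ⥤ 𝒞}
    {c : Cocone D} (hc : IsColimit c) (hD : ∀ j, IsFinPres (D.obj j)) : IsFinPres c.pt := by
  have := fun j => (isFinPres_iff_isFinitelyPresentable (D.obj j)).1 (hD j)
  exact (isFinPres_iff_isFinitelyPresentable _).2 <| isCardinalPresentable_of_isColimit' c hc _
    ((hasCardinalLT_aleph0_iff _).2 inferInstance)

variable [HasColimits 𝒞]

lemma isFinPres_initial : IsFinPres (⊥_ 𝒞) :=
  IsFinPres.of_isColimit (colimit.isColimit _) (fun j => j.as.elim)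

lemma IsFinPres.coprod {K L : 𝒞} (hK : IsFinPres K) (hL : IsFinPres L) : IsFinPres (K ⨿ L) :=
  IsFinPres.of_isColimit (colimit.isColimit _) (by rintro ⟨_ | _⟩ <;> assumption)

lemma IsFinPres.pushout {K L M : 𝒞} {f : K ⟶ L} {g : K ⟶ M} (hK : IsFinPres K)
    (hL : IsFinPres L) (hM : IsFinPres M) : IsFinPres (pushout f g) :=
  IsFinPres.of_isColimit (colimit.isColimit _) (by rintro (_ | _ | _) <;> assumption)

end FinitelyPresented

section LocallyFinitelyPresentable

variable {𝒞 : Type u} [Category.{v} 𝒞] [IsLFP 𝒞]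

lemma IsLFP.exists_colimitPresentation (X : 𝒞) :
    ∃ (J : Type v) (_ : SmallCategory J) (_ : IsFiltered J) (p : ColimitPresentation J X),
      ∀ j, IsFinPres (p.diag.obj j) := by
  obtain ⟨S, -, hS, hX⟩ := IsLFP.exists_gen (𝒞 := 𝒞)
  obtain ⟨J, _, _, D, ⟨pt, ι⟩, ⟨hc⟩, rfl, hD⟩ := hX X
  exact ⟨J, _, ‹_›, ⟨D, ι, hc⟩, fun j => hS _ (hD j)⟩

lemma IsLFP.hom_ext {Y Z : 𝒞} {u v : Y ⟶ Z}
    (h : ∀ (A : 𝒞), IsFinPres A → ∀ a : A ⟶ Y, a ≫ u = a ≫ v) : u = v := by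
  obtain ⟨J, _, _, p, hp⟩ := IsLFP.exists_colimitPresentation Y
  exact p.isColimit.hom_ext fun j => h _ (hp j) _

lemma CategoryTheory.IsPushout.exists_isFinPres_stage {K K' X Y A : 𝒞} {a : K ⟶ X}
    {k : K ⟶ K'} {l : X ⟶ Y} {c : K' ⟶ Y} (hP : IsPushout a k l c) (hK : IsFinPres K)
    (hK' : IsFinPres K') (hA : IsFinPres A) (x : A ⟶ Y) :
    ∃ (E P : 𝒞) (e : E ⟶ X) (m : E ⟶ P) (e' : P ⟶ Y) (x' : A ⟶ P),
      IsFinPres E ∧ IsFinPres P ∧ IsPushout e m l e' ∧ x' ≫ e' = x := by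
  obtain ⟨J, _, _, p, hp⟩ := IsLFP.exists_colimitPresentation X
  obtain ⟨i₀, α₀, hα₀⟩ := hK.exists_hom_of_isColimit p.isColimit a
  let α (i : Under i₀) : K ⟶ p.diag.obj i.right := α₀ ≫ p.diag.map i.hom
  have hα (i : Under i₀) : α i ≫ p.ι.app i.right = a := by simp [α, hα₀]
  let αK : (Functor.const (Under i₀)).obj K ⟶ Under.forget i₀ ⋙ p.diag :=
    { app := α
      naturality := fun i i' t => by
        dsimp
        rw [Category.id_comp, Category.assoc, ← Functor.map_comp, Under.w t] }
  have : Nonempty (Under i₀) := ⟨Under.mk (𝟙 i₀)⟩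
  -- Over `Under i₀` this presents `X` in `Under K`; the left adjoint `Under.pushout k` turns it
  -- into a filtered colimit presentation of `pushout a k` by the `pushout (α i) k`.
  have hc := Under.isColimitLiftCocone _ αK ((Cocone.mk _ p.ι).whisker (Under.forget i₀)) a hα
    ((Functor.Final.isColimitWhiskerEquiv (Under.forget i₀) _).symm p.isColimit)
  have hw (i : Under i₀) : α i ≫ p.ι.app i.right ≫ pushout.inl a k = k ≫ pushout.inr a k := by
    rw [← Category.assoc, hα i, pushout.condition]
  obtain ⟨i, x', hx'⟩ : ∃ (i : Under i₀) (x' : A ⟶ pushout (α i) k),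
      x' ≫ pushout.desc _ _ (hw i) = x ≫ hP.isoPushout.hom :=
    hA.exists_hom_of_isColimit
      (isColimitOfPreserves (Under.pushout k ⋙ Under.forget K') hc) (x ≫ hP.isoPushout.hom)
  have hstage := IsPushout.of_left' ((hα i).symm ▸ hP) (IsPushout.of_hasPushout (α i) k)
  refine ⟨_, _, _, _, _, x', hp _, hK.pushout (hp _) hK', hstage, ?_⟩
  rw [← cancel_mono hP.isoPushout.hom, ← hx', Category.assoc]
  congr 1
  apply pushout.hom_ext <;> simp

end LocallyFinitelyPresentable

section Generator

variable {𝒞 : Type u} [Category.{v} 𝒞]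

lemma InGen.id [HasColimits 𝒞] (X : 𝒞) : InGen (𝟙 X) :=
  ⟨⊥_ 𝒞, ⊥_ 𝒞, isFinPres_initial, isFinPres_initial, 𝟙 _, initial.to X, initial.to X,
    IsPushout.id_vert _⟩

lemma InGen.coprod_inl [HasColimits 𝒞] (X : 𝒞) {D : 𝒞} (hD : IsFinPres D) :
    InGen (coprod.inl : X ⟶ X ⨿ D) :=
  ⟨⊥_ 𝒞, D, isFinPres_initial, hD, initial.to D, initial.to X, coprod.inr,
    IsPushout.of_hasBinaryCoproduct' X D⟩

variable [IsLFP 𝒞]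

lemma InGen.comp_of_isPushout {X Y Z A A' : 𝒞} {l : X ⟶ Y} (hl : InGen l) (hA : IsFinPres A)
    (hA' : IsFinPres A') {x : A ⟶ Y} {k : A ⟶ A'} {m : Y ⟶ Z} {c : A' ⟶ Z}
    (hP : IsPushout x k m c) : InGen (l ≫ m) := by
  obtain ⟨K, K', hK, hK', _, _, _, hl⟩ := hl
  obtain ⟨E, P, _, n, _, x', hE, hPf, hstage, rfl⟩ := hl.exists_isFinPres_stage hK hK' hA x
  -- `Z = Y ⊔_P (P ⊔_A A') = X ⊔_E (P ⊔_A A')`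
  exact ⟨E, pushout x' k, hE, hA.pushout hPf hA', n ≫ pushout.inl x' k, _, _,
    hstage.paste_vert (hP.of_left' (IsPushout.of_hasPushout x' k))⟩

lemma InGen.comp_pushout_inl {X Y₁ Y₂ : 𝒞} {l₁ : X ⟶ Y₁} {l₂ : X ⟶ Y₂} (h₁ : InGen l₁)
    (h₂ : InGen l₂) : InGen (l₁ ≫ pushout.inl l₁ l₂) := by
  obtain ⟨K, K', hK, hK', _, _, _, hP⟩ := h₂
  exact h₁.comp_of_isPushout hK hK' (hP.paste_horiz (IsPushout.of_hasPushout l₁ l₂))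

lemma InGen.comp_pushout_codiag {X Y A : 𝒞} {l : X ⟶ Y} (hl : InGen l) (hA : IsFinPres A)
    (p q : A ⟶ Y) : InGen (l ≫ pushout.inl (coprod.desc p q) (codiag A)) :=
  hl.comp_of_isPushout (hA.coprod hA) hA (IsPushout.of_hasPushout _ _)

end Generator

namespace CosliceGen

variable {f : Under B}

-- The domain of `X.hom.right` is `X.left.obj.right` only up to unfolding `ObjectProperty.ι`, which
-- `simp` does not see through; `homRight`, `coconeRight` and the structure literal in `arrowMk`
-- keep the objects in the syntactic form the coproduct and pushout lemmas expect.
abbrev homRight (X : CostructuredArrow (cosliceGenIncl B) f) : X.left.obj.right ⟶ f.right :=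
  X.hom.right

abbrev arrowMk {Y : ℬ} (l : B ⟶ Y) (hl : InGen l) (g : Y ⟶ f.right) (hg : l ≫ g = f.hom) :
    CostructuredArrow (cosliceGenIncl B) f where
  left := ⟨{ left := ⟨⟨⟩⟩, right := Y, hom := l }, hl⟩
  right := ⟨⟨⟩⟩
  hom := Under.homMk g hg

@[simp]
lemma homRight_arrowMk {Y : ℬ} (l : B ⟶ Y) (hl : InGen l) (g : Y ⟶ f.right)
    (hg : l ≫ g = f.hom) : homRight (arrowMk l hl g hg) = g :=
  rfl

def arrowHomMk {X X' : CostructuredArrow (cosliceGenIncl B) f}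
    (χ : X.left.obj.right ⟶ X'.left.obj.right) (hl : X.left.obj.hom ≫ χ = X'.left.obj.hom)
    (hg : χ ≫ homRight X' = homRight X) : X ⟶ X' :=
  CostructuredArrow.homMk (ObjectProperty.homMk (Under.homMk χ hl))
    (Under.UnderMorphism.ext hg)

abbrev arrowMkHomMk {Y Y' : ℬ} {l : B ⟶ Y} {hl : InGen l} {g : Y ⟶ f.right}
    {hg : l ≫ g = f.hom} {l' : B ⟶ Y'} {hl' : InGen l'} {g' : Y' ⟶ f.right}
    {hg' : l' ≫ g' = f.hom} (χ : Y ⟶ Y') (h₁ : l ≫ χ = l') (h₂ : χ ≫ g' = g) :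
    arrowMk l hl g hg ⟶ arrowMk l' hl' g' hg' :=
  arrowHomMk χ h₁ h₂

@[simp]
lemma arrowHomMk_right {X X' : CostructuredArrow (cosliceGenIncl B) f}
    (χ : X.left.obj.right ⟶ X'.left.obj.right) (hl : X.left.obj.hom ≫ χ = X'.left.obj.hom)
    (hg : χ ≫ homRight X' = homRight X) : (arrowHomMk χ hl hg).left.hom.right = χ :=
  rfl

@[simp]
lemma right_comp_homRight {X X' : CostructuredArrow (cosliceGenIncl B) f} (u : X ⟶ X') :
    u.left.hom.right ≫ homRight X' = homRight X :=
  congrArg Under.Hom.right (CostructuredArrow.w u)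

section Cocone

variable (Z : Cocone (CostructuredArrow.proj (cosliceGenIncl B) f ⋙ cosliceGenIncl B))

abbrev coconeRight (X : CostructuredArrow (cosliceGenIncl B) f) :
    X.left.obj.right ⟶ Z.pt.right :=
  (Z.ι.app X).right

lemma right_comp_coconeRight {X X' : CostructuredArrow (cosliceGenIncl B) f} (u : X ⟶ X') :
    u.left.hom.right ≫ coconeRight Z X' = coconeRight Z X :=
  congrArg Under.Hom.right (Z.w u)

lemma hom_comp_coconeRight (X : CostructuredArrow (cosliceGenIncl B) f) :
    X.left.obj.hom ≫ coconeRight Z X = Z.pt.hom :=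
  Under.w (Z.ι.app X)

end Cocone

variable [IsLFP ℬ]

lemma exists_hom_comp_eq (X : CostructuredArrow (cosliceGenIncl B) f) {A : ℬ}
    (hA : IsFinPres A) (p q : A ⟶ X.left.obj.right) (h : p ≫ homRight X = q ≫ homRight X) :
    ∃ (W : CostructuredArrow (cosliceGenIncl B) f) (u : X ⟶ W),
      p ≫ u.left.hom.right = q ≫ u.left.hom.right := by
  refine ⟨arrowMk _ (X.left.property.comp_pushout_codiag hA p q)
    (pushout.desc (homRight X) (p ≫ homRight X) (by ext <;> simp [h])) (by simp),
    arrowHomMk (pushout.inl _ _) rfl (by simp), ?_⟩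
  have hc := pushout.condition (f := coprod.desc p q) (g := codiag A)
  have hinl := coprod.inl ≫= hc
  have hinr := coprod.inr ≫= hc
  simp only [coprod.inl_desc_assoc, coprod.inr_desc_assoc, Category.id_comp] at hinl hinr
  simp [hinl, hinr]

variable (f) in
lemma isFiltered : IsFiltered (CostructuredArrow (cosliceGenIncl B) f) where
  cocone_objs X₁ X₂ :=
    ⟨arrowMk _ (X₁.left.property.comp_pushout_inl X₂.left.property)
      (pushout.desc (homRight X₁) (homRight X₂) (by simp)) (by simp),
      arrowHomMk (pushout.inl _ _) rfl (by simp),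
      arrowHomMk (pushout.inr _ _) pushout.condition.symm (by simp), trivial⟩
  cocone_maps {X₁ X₂} η ζ := by
    obtain ⟨K, K', -, hK', k, a, c, hP⟩ := X₁.left.property
    obtain ⟨W, u, hu⟩ := exists_hom_comp_eq X₂ hK' (c ≫ η.left.hom.right)
      (c ≫ ζ.left.hom.right) (by simp)
    exact ⟨W, u, CostructuredArrow.hom_ext _ _ (ObjectProperty.hom_ext _
      (Under.UnderMorphism.ext (hP.hom_ext (by simp) (by simpa using hu))))⟩
  nonempty := ⟨arrowMk (𝟙 B) (InGen.id B) f.hom (Category.id_comp _)⟩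

lemma exists_comp_eq_comp {X₁ X₂ : CostructuredArrow (cosliceGenIncl B) f} {A : ℬ}
    (hA : IsFinPres A) (p₁ : A ⟶ X₁.left.obj.right) (p₂ : A ⟶ X₂.left.obj.right)
    (h : p₁ ≫ homRight X₁ = p₂ ≫ homRight X₂) :
    ∃ (W : CostructuredArrow (cosliceGenIncl B) f) (u₁ : X₁ ⟶ W) (u₂ : X₂ ⟶ W),
      p₁ ≫ u₁.left.hom.right = p₂ ≫ u₂.left.hom.right := by
  have := isFiltered f
  obtain ⟨W, u, hu⟩ := exists_hom_comp_eq (IsFiltered.max X₁ X₂) hA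
    (p₁ ≫ (IsFiltered.leftToMax X₁ X₂).left.hom.right)
    (p₂ ≫ (IsFiltered.rightToMax X₁ X₂).left.hom.right) (by simpa using h)
  exact ⟨W, IsFiltered.leftToMax X₁ X₂ ≫ u, IsFiltered.rightToMax X₁ X₂ ≫ u, by simpa using hu⟩

section Colimit

variable {J : Type v} [SmallCategory J] {p : ColimitPresentation J f.right}
  (hp : ∀ j, IsFinPres (p.diag.obj j))
  (Z : Cocone (CostructuredArrow.proj (cosliceGenIncl B) f ⋙ cosliceGenIncl B))

noncomputable abbrev coprodArrow (j : J) : CostructuredArrow (cosliceGenIncl B) f :=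
  arrowMk coprod.inl (InGen.coprod_inl B (hp j)) (coprod.desc f.hom (p.ι.app j)) (by simp)

noncomputable def coprodArrowMap {j j' : J} (t : j ⟶ j') :
    coprodArrow hp j ⟶ coprodArrow hp j' :=
  arrowMkHomMk (coprod.map (𝟙 B) (p.diag.map t)) (by simp) (by ext <;> simp)

noncomputable def descRight : f.right ⟶ Z.pt.right :=
  p.isColimit.desc (Cocone.mk _
    { app := fun j => coprod.inr ≫ coconeRight Z (coprodArrow hp j)
      naturality := fun _ _ t => (coprod.inr_map_assoc _ _ _).symm.trans
        ((coprod.inr ≫= right_comp_coconeRight Z (coprodArrowMap hp t)).trans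
          (Category.comp_id _).symm) })

lemma ι_descRight (j : J) :
    p.ι.app j ≫ descRight hp Z = coprod.inr ≫ coconeRight Z (coprodArrow hp j) :=
  p.isColimit.fac _ j

lemma homRight_comp_descRight [IsFiltered J] (X : CostructuredArrow (cosliceGenIncl B) f) :
    homRight X ≫ descRight hp Z = coconeRight Z X := by
  refine IsLFP.hom_ext fun A hA a => ?_
  obtain ⟨j, t, ht⟩ := hA.exists_hom_of_isColimit p.isColimit (a ≫ homRight X)
  obtain ⟨W, u₁, u₂, hu⟩ := exists_comp_eq_comp (X₂ := coprodArrow hp j) hA a (t ≫ coprod.inr)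
    (by simpa using ht.symm)
  calc a ≫ homRight X ≫ descRight hp Z
      = t ≫ coprod.inr ≫ coconeRight Z (coprodArrow hp j) := by
        rw [← Category.assoc, ← ht, Category.assoc, ι_descRight]
    _ = a ≫ coconeRight Z X := by
        rw [← right_comp_coconeRight Z u₁, ← right_comp_coconeRight Z u₂, ← Category.assoc,
          ← Category.assoc, ← hu, Category.assoc]

lemma hom_comp_descRight [IsFiltered J] : f.hom ≫ descRight hp Z = Z.pt.hom := by
  let X₀ := arrowMk (𝟙 B) (InGen.id B) f.hom (Category.id_comp _)
  exact (homRight_comp_descRight hp Z X₀).trans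
    ((Category.id_comp _).symm.trans (hom_comp_coconeRight Z X₀))

variable [IsFiltered J] (p) in
noncomputable def isColimitCanonicalCocone : IsColimit (canonicalCocone f) where
  desc Z := Under.homMk (descRight hp Z) (hom_comp_descRight hp Z)
  fac Z X := Under.UnderMorphism.ext (homRight_comp_descRight hp Z X)
  uniq Z m hm := Under.UnderMorphism.ext <| p.isColimit.hom_ext fun j => by
    have h : homRight (coprodArrow hp j) ≫ m.right = coconeRight Z (coprodArrow hp j) :=
      congrArg Under.Hom.right (hm (coprodArrow hp j))
    change p.ι.app j ≫ m.right = p.ι.app j ≫ descRight hp Z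
    rw [ι_descRight, ← h]
    exact (coprod.inr_desc_assoc _ _ _).symm

end Colimit

end CosliceGen

/-- `𝒢_B` is a dense generator of `B↓ℬ`: every object `f` of the coslice is the colimit of
the canonical (filtered) diagram `𝒢_B ↓ f ⥤ B↓ℬ`. -/
theorem stmt11 [IsLFP ℬ] (f : Under B) :
    IsFiltered (CostructuredArrow (cosliceGenIncl B) f) ∧
      Nonempty (IsColimit (canonicalCocone f)) := by
  obtain ⟨J, _, _, p, hp⟩ := IsLFP.exists_colimitPresentation f.right
  exact ⟨CosliceGen.isFiltered f, ⟨CosliceGen.isColimitCanonicalCocone p hp⟩⟩
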